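/- Let M₁ = Θ₁ᵀΘ₁ and M₂ = Θ₂ᵀΘ₂ be metrics (Θᵢ invertible), and suppose (Θ₁J₁Θ₁⁻¹)_s ≤ −λ₁ I and (Θ₂J₂Θ₂⁻¹)_s ≤ −λ₂ I. Suppose the coupling Jacobians satisfy Θ₁J₁₂Θ₂⁻¹ = −k·(Θ₂J₂₁Θ₁⁻¹)ᵀ for some k > 0. Let J = [[J₁, J₁₂],[J₂₁, J₂]] and Θ = diag(Θ₁, √k·Θ₂). Then (ΘJΘ⁻¹)_s = diag((Θ₁J₁Θ₁⁻¹)_s, (Θ₂J₂Θ₂⁻¹)_s) ≤ −min(λ₁, λ₂)·I. -/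

import Mathlib

/-!
Rescaling Θ₂ by √k makes the off-diagonal blocks of the conjugated Jacobian `ΘJΘ⁻¹` equal to
`-Bᵀ` and `B` with `B = √k Θ₂J₂₁Θ₁⁻¹`. They cancel in the symmetric part, which is therefore
block diagonal, and its quadratic form splits into the two contracting ones.
-/

open Matrix

/-- Symmetric part of a square matrix. -/
noncomputable def symPart {m : Type*} [Fintype m] (A : Matrix m m ℝ) : Matrix m m ℝ :=
  (1 / 2 : ℝ) • (A + Aᵀ)

namespace Matrix

section Inverse

variable {m n : Type*} [Fintype m] [Fintype n] [DecidableEq m] [DecidableEq n]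

theorem inv_fromBlocks_zero_zero {α : Type*} [CommRing α] {A : Matrix m m α} {D : Matrix n n α}
    (hA : IsUnit A) (hD : IsUnit D) :
    (fromBlocks A 0 0 D)⁻¹ = fromBlocks A⁻¹ 0 0 D⁻¹ := by
  rw [inv_fromBlocks_zero₁₂_of_isUnit_iff A 0 D (iff_of_true hA hD)]
  simp

theorem fromBlocks_zero_zero_mul_mul_inv {α : Type*} [CommRing α] {A : Matrix m m α}
    {D : Matrix n n α} (hA : IsUnit A) (hD : IsUnit D) (J₁ : Matrix m m α) (J₁₂ : Matrix m n α)
    (J₂₁ : Matrix n m α) (J₂ : Matrix n n α) :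
    fromBlocks A 0 0 D * fromBlocks J₁ J₁₂ J₂₁ J₂ * (fromBlocks A 0 0 D)⁻¹
      = fromBlocks (A * J₁ * A⁻¹) (A * J₁₂ * D⁻¹) (D * J₂₁ * A⁻¹) (D * J₂ * D⁻¹) := by
  simp [inv_fromBlocks_zero_zero hA hD, fromBlocks_multiply]

theorem inv_smul_of_ne_zero {K : Type*} [Field K] {c : K} (hc : c ≠ 0) {A : Matrix n n K}
    (hA : IsUnit A.det) : (c • A)⁻¹ = c⁻¹ • A⁻¹ :=
  inv_smul' A (Units.mk0 c hc) hA

end Inverse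

end Matrix

section Blocks

variable {m n : Type*} [Fintype m] [Fintype n]

theorem symPart_fromBlocks_of_eq_neg_transpose (A : Matrix m m ℝ) (B : Matrix m n ℝ)
    (C : Matrix n m ℝ) (D : Matrix n n ℝ) (hBC : B = -Cᵀ) :
    symPart (fromBlocks A B C D) = fromBlocks (symPart A) 0 0 (symPart D) := by
  simp [symPart, fromBlocks_transpose, fromBlocks_add, fromBlocks_smul, hBC]

theorem dotProduct_fromBlocks_zero_zero_mulVec (A : Matrix m m ℝ) (D : Matrix n n ℝ)
    (v : m ⊕ n → ℝ) :
    v ⬝ᵥ (fromBlocks A 0 0 D *ᵥ v)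
      = v ∘ Sum.inl ⬝ᵥ (A *ᵥ (v ∘ Sum.inl)) + v ∘ Sum.inr ⬝ᵥ (D *ᵥ (v ∘ Sum.inr)) := by
  conv_lhs => rw [← Sum.elim_comp_inl_inr v]
  rw [fromBlocks_mulVec, sumElim_dotProduct_sumElim]
  simp only [zero_mulVec, add_zero, zero_add, Sum.elim_comp_inl, Sum.elim_comp_inr]

theorem dotProduct_self_eq_inl_add_inr (v : m ⊕ n → ℝ) :
    v ⬝ᵥ v = v ∘ Sum.inl ⬝ᵥ v ∘ Sum.inl + v ∘ Sum.inr ⬝ᵥ v ∘ Sum.inr := by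
  conv_lhs => rw [← Sum.elim_comp_inl_inr v]
  exact sumElim_dotProduct_sumElim ..

theorem dotProduct_fromBlocks_zero_zero_mulVec_le {A : Matrix m m ℝ} {D : Matrix n n ℝ}
    {a d : ℝ} (hA : ∀ u, u ⬝ᵥ (A *ᵥ u) ≤ -a * (u ⬝ᵥ u))
    (hD : ∀ u, u ⬝ᵥ (D *ᵥ u) ≤ -d * (u ⬝ᵥ u)) (v : m ⊕ n → ℝ) :
    v ⬝ᵥ (fromBlocks A 0 0 D *ᵥ v) ≤ -min a d * (v ⬝ᵥ v) := by
  rw [dotProduct_fromBlocks_zero_zero_mulVec, dotProduct_self_eq_inl_add_inr, mul_add]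
  gcongr ?_ + ?_
  · exact (hA _).trans (mul_le_mul_of_nonneg_right (by simp) (dotProduct_self_star_nonneg _))
  · exact (hD _).trans (mul_le_mul_of_nonneg_right (by simp) (dotProduct_self_star_nonneg _))

end Blocks

/-- Negative feedback combination: the generalized Jacobian of the combined system
is block diagonal in the combined metric and contracting with rate min(λ₁, λ₂). -/
theorem negative_feedback_combination {n₁ n₂ : ℕ}
    (Θ₁ J₁ : Matrix (Fin n₁) (Fin n₁) ℝ) (Θ₂ J₂ : Matrix (Fin n₂) (Fin n₂) ℝ)
    (J₁₂ : Matrix (Fin n₁) (Fin n₂) ℝ) (J₂₁ : Matrix (Fin n₂) (Fin n₁) ℝ)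
    (lam₁ lam₂ k : ℝ) (hk : 0 < k)
    (hΘ₁ : IsUnit Θ₁.det) (hΘ₂ : IsUnit Θ₂.det)
    (h₁ : ∀ v : Fin n₁ → ℝ, v ⬝ᵥ (symPart (Θ₁ * J₁ * Θ₁⁻¹) *ᵥ v) ≤ -lam₁ * (v ⬝ᵥ v))
    (h₂ : ∀ v : Fin n₂ → ℝ, v ⬝ᵥ (symPart (Θ₂ * J₂ * Θ₂⁻¹) *ᵥ v) ≤ -lam₂ * (v ⬝ᵥ v))
    (hfb : Θ₁ * J₁₂ * Θ₂⁻¹ = (-k) • (Θ₂ * J₂₁ * Θ₁⁻¹)ᵀ) :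
    symPart
        (Matrix.fromBlocks Θ₁ 0 0 (Real.sqrt k • Θ₂) *
          Matrix.fromBlocks J₁ J₁₂ J₂₁ J₂ *
            (Matrix.fromBlocks Θ₁ 0 0 (Real.sqrt k • Θ₂))⁻¹)
      = Matrix.fromBlocks (symPart (Θ₁ * J₁ * Θ₁⁻¹)) 0 0 (symPart (Θ₂ * J₂ * Θ₂⁻¹)) ∧
    ∀ v : Fin n₁ ⊕ Fin n₂ → ℝ,
      v ⬝ᵥ (symPart
          (Matrix.fromBlocks Θ₁ 0 0 (Real.sqrt k • Θ₂) *
            Matrix.fromBlocks J₁ J₁₂ J₂₁ J₂ *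
              (Matrix.fromBlocks Θ₁ 0 0 (Real.sqrt k • Θ₂))⁻¹) *ᵥ v)
        ≤ -min lam₁ lam₂ * (v ⬝ᵥ v) := by
  set s := Real.sqrt k
  have hs : s ≠ 0 := (Real.sqrt_pos.2 hk).ne'
  have hsk : s⁻¹ * k = s := by
    rw [inv_mul_eq_iff_eq_mul₀ hs, Real.mul_self_sqrt hk.le]
  have hsΘ₂ : IsUnit (s • Θ₂).det := by simpa [det_smul, hs] using hΘ₂
  have hconj : fromBlocks Θ₁ 0 0 (s • Θ₂) * fromBlocks J₁ J₁₂ J₂₁ J₂ *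
      (fromBlocks Θ₁ 0 0 (s • Θ₂))⁻¹ = fromBlocks (Θ₁ * J₁ * Θ₁⁻¹)
        (-(s • (Θ₂ * J₂₁ * Θ₁⁻¹))ᵀ) (s • (Θ₂ * J₂₁ * Θ₁⁻¹)) (Θ₂ * J₂ * Θ₂⁻¹) := by
    rw [fromBlocks_zero_zero_mul_mul_inv ((isUnit_iff_isUnit_det _).2 hΘ₁)
      ((isUnit_iff_isUnit_det _).2 hsΘ₂), inv_smul_of_ne_zero hs hΘ₂]
    congr 1
    · rw [Matrix.mul_smul, hfb, smul_smul, mul_neg, hsk, neg_smul, transpose_smul]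
    · rw [Matrix.smul_mul, Matrix.smul_mul]
    · rw [Matrix.smul_mul, Matrix.smul_mul, Matrix.mul_smul, smul_smul, mul_inv_cancel₀ hs,
        one_smul]
  have hblock := hconj ▸ symPart_fromBlocks_of_eq_neg_transpose _ _ _ _ rfl
  exact ⟨hblock, fun v => hblock ▸ dotProduct_fromBlocks_zero_zero_mulVec_le h₁ h₂ v⟩
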